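/- arXiv:1802.07951 — 2 statements merged into one kernel-verified Lean document; each statement's English description precedes it below -/
import Mathlib

section
/- Let L be an n-dimensional metabelian Lie algebra with t = dim[L,L] = 2 and i(L) = 2 (so n is even, n = 2q). Assuming Milenteva's bound α(L) ≥ ⌊(2n + t² + t)/(t + 2)⌋, it follows that α(L) = c(L) = q + 1, i.e. L admits a commutative polarization. Moreover in this situation [L,L] = Z(L). -/
/-!
Every abelian subalgebra is isotropic for the Kirillov form `(x, y) ↦ ξ ⁅x, y⁆`, whose kernel is
`L(ξ)`; hence `α(L) ≤ c(L) = q + 1`, while Milenteva's bound for `t = 2` reads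
`α(L) ≥ ⌊(4q + 6)/4⌋ = q + 1`. The centre lies in every `L(ξ)`, so
`2 = dim [L,L] ≤ dim Z(L) ≤ i(L) = 2` and the inclusion `[L,L] ⊆ Z(L)` is an equality.
-/

open Module

/-- The stabilizer `L(ξ) = {x ∈ L | ξ ⁅x, y⁆ = 0 for all y}` of a linear functional. -/
def lieStab (k : Type*) [Field k] (L : Type*) [LieRing L] [LieAlgebra k L]
    (ξ : Module.Dual k L) : Submodule k L where
  carrier := {x | ∀ y, ξ ⁅x, y⁆ = 0}
  add_mem' := by intro a b ha hb y; rw [add_lie, map_add, ha y, hb y, add_zero]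
  zero_mem' := by intro y; rw [zero_lie, map_zero]
  smul_mem' := by intro c a ha y; rw [smul_lie, map_smul, ha y, smul_zero]

/-- The index `i(L)`: the minimal dimension of a stabilizer `L(ξ)`, `ξ ∈ L*`. -/
noncomputable def lieIndex (k : Type*) [Field k] (L : Type*) [LieRing L] [LieAlgebra k L] : ℕ :=
  sInf (Set.range fun ξ : Module.Dual k L => finrank k (lieStab k L ξ))

/-- The maximal abelian dimension `α(L)`. -/
noncomputable def maxAbelianDim (k : Type*) [Field k] (L : Type*) [LieRing L]
    [LieAlgebra k L] : ℕ :=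
  sSup {d : ℕ | ∃ H : LieSubalgebra k L, IsLieAbelian H ∧ finrank k H = d}

/-- The magic number `c(L) = (dim L + i(L))/2`. -/
noncomputable def magic (k : Type*) [Field k] (L : Type*) [LieRing L] [LieAlgebra k L] : ℕ :=
  (finrank k L + lieIndex k L) / 2

section Isotropic

variable {k : Type*} [Field k] {V : Type*} [AddCommGroup V] [Module k V] [FiniteDimensional k V]

theorem two_mul_finrank_le_of_isotropic (Φ : V →ₗ[k] Dual k V) (W : Submodule k V)
    (hW : ∀ x ∈ W, ∀ y ∈ W, Φ x y = 0) :
    2 * finrank k W ≤ finrank k V + finrank k (LinearMap.ker Φ) := by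
  have h_rank := LinearMap.finrank_range_add_finrank_ker (Φ.domRestrict W)
  have h_range : finrank k (LinearMap.range (Φ.domRestrict W)) ≤ finrank k W.dualAnnihilator := by
    rw [LinearMap.range_domRestrict]
    refine Submodule.finrank_mono ?_
    rintro _ ⟨x, hx, rfl⟩
    exact (Submodule.mem_dualAnnihilator _).2 fun y hy => hW x hx y hy
  have h_ker : finrank k (LinearMap.ker (Φ.domRestrict W)) ≤ finrank k (LinearMap.ker Φ) := by
    rw [← Submodule.finrank_map_subtype_eq]
    refine Submodule.finrank_mono ?_
    rintro _ ⟨x, hx, rfl⟩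
    exact hx
  have := Subspace.finrank_add_finrank_dualAnnihilator_eq W
  omega

end Isotropic

section Kirillov

variable (k : Type*) [Field k] {L : Type*} [LieRing L] [LieAlgebra k L]

def kirillovForm (ξ : Dual k L) : L →ₗ[k] Dual k L :=
  LinearMap.llcomp k L L k ξ ∘ₗ (LieAlgebra.ad k L : L →ₗ[k] Module.End k L)

theorem kirillovForm_apply (ξ : Dual k L) (x y : L) : kirillovForm k ξ x y = ξ ⁅x, y⁆ := rfl

theorem ker_kirillovForm (ξ : Dual k L) : LinearMap.ker (kirillovForm k ξ) = lieStab k L ξ := by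
  ext x
  exact LinearMap.ext_iff

theorem center_le_lieStab (ξ : Dual k L) :
    (LieAlgebra.center k L : Submodule k L) ≤ lieStab k L ξ := fun x hx y => by
  rw [← lie_skew, (LieModule.mem_maxTrivSubmodule k L L x).mp hx y, neg_zero, map_zero]

variable (L)

theorem exists_finrank_lieStab_eq_lieIndex :
    ∃ ξ : Dual k L, finrank k (lieStab k L ξ) = lieIndex k L :=
  Nat.sInf_mem (Set.range_nonempty _)

variable [Module.Finite k L]

theorem finrank_center_le_lieIndex : finrank k (LieAlgebra.center k L) ≤ lieIndex k L := by
  obtain ⟨ξ, hξ⟩ := exists_finrank_lieStab_eq_lieIndex k L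
  exact hξ ▸ Submodule.finrank_mono (center_le_lieStab k ξ)

variable {L}

theorem two_mul_finrank_le_finrank_add_finrank_lieStab (ξ : Dual k L) (H : LieSubalgebra k L)
    [IsLieAbelian H] : 2 * finrank k H ≤ finrank k L + finrank k (lieStab k L ξ) := by
  rw [← ker_kirillovForm]
  refine two_mul_finrank_le_of_isotropic _ H.toSubmodule fun x hx y hy => ?_
  have h := congrArg Subtype.val (trivial_lie_zero H H ⟨x, hx⟩ ⟨y, hy⟩)
  rw [LieSubalgebra.coe_bracket, ZeroMemClass.coe_zero] at h
  rw [kirillovForm_apply, h, map_zero]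

theorem two_mul_finrank_le_finrank_add_lieIndex (H : LieSubalgebra k L) [IsLieAbelian H] :
    2 * finrank k H ≤ finrank k L + lieIndex k L := by
  obtain ⟨ξ, hξ⟩ := exists_finrank_lieStab_eq_lieIndex k L
  exact hξ ▸ two_mul_finrank_le_finrank_add_finrank_lieStab k ξ H

variable (L)

theorem exists_isLieAbelian_finrank_eq_maxAbelianDim :
    ∃ H : LieSubalgebra k L, IsLieAbelian H ∧ finrank k H = maxAbelianDim k L := by
  have : Subsingleton (⊥ : LieSubalgebra k L) := LieSubalgebra.subsingleton_bot
  refine Nat.sSup_mem (s := {d | ∃ H : LieSubalgebra k L, IsLieAbelian H ∧ finrank k H = d})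
    ⟨_, ⊥, inferInstance, rfl⟩ ⟨finrank k L, ?_⟩
  rintro _ ⟨H, -, rfl⟩
  exact Submodule.finrank_le H.toSubmodule

theorem maxAbelianDim_le_magic : maxAbelianDim k L ≤ magic k L := by
  obtain ⟨H, hH, hdim⟩ := exists_isLieAbelian_finrank_eq_maxAbelianDim k L
  have := two_mul_finrank_le_finrank_add_lieIndex k H
  rw [magic]
  omega

end Kirillov

theorem metabelian_CP_general (k : Type*) [Field k]
    (L : Type*) [LieRing L] [LieAlgebra k L] [Module.Finite k L]
    (n q : ℕ) (hdim : finrank k L = n) (hn : n = 2 * q)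
    (hmeta : LieAlgebra.derivedSeries k L 1 ≤ LieAlgebra.center k L)
    (ht : finrank k (LieAlgebra.derivedSeries k L 1) = 2)
    (hi : lieIndex k L = 2)
    (hMilenteva : (2 * n + 2 ^ 2 + 2) / (2 + 2) ≤ maxAbelianDim k L) :
    maxAbelianDim k L = magic k L ∧ magic k L = q + 1 ∧
    (∃ P : LieSubalgebra k L, IsLieAbelian P ∧ finrank k P = magic k L) ∧
    LieAlgebra.derivedSeries k L 1 = LieAlgebra.center k L := by
  have h_magic : magic k L = q + 1 := by
    rw [magic, hdim, hi]
    omega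
  have h_alpha : maxAbelianDim k L = magic k L := by
    have := maxAbelianDim_le_magic k L
    omega
  obtain ⟨P, hP, hPdim⟩ := exists_isLieAbelian_finrank_eq_maxAbelianDim k L
  refine ⟨h_alpha, h_magic, ⟨P, hP, hPdim.trans h_alpha⟩, ?_⟩
  have h_center := finrank_center_le_lieIndex k L
  exact LieSubmodule.toSubmodule_injective <|
    Submodule.eq_of_le_of_finrank_le hmeta (by
      change finrank k (LieAlgebra.center k L) ≤ finrank k (LieAlgebra.derivedSeries k L 1)
      omega)

/-- an `n`-dimensional metabelian Lie algebra with `dim [L,L] = 2` and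
`i(L) = 2` (so `n = 2q`) admits a commutative polarization: assuming Milenteva's bound
`α(L) ≥ ⌊(2n + t² + t)/(t + 2)⌋` (with `t = 2`), one gets `α(L) = c(L) = q + 1`;
moreover `[L,L] = Z(L)`. -/
theorem metabelian_CP (k : Type*) [Field k] [CharZero k]
    (L : Type*) [LieRing L] [LieAlgebra k L] [Module.Finite k L]
    (n q : ℕ) (hdim : finrank k L = n) (hn : n = 2 * q)
    (hmeta : LieAlgebra.derivedSeries k L 1 ≤ LieAlgebra.center k L)
    (ht : finrank k (LieAlgebra.derivedSeries k L 1) = 2)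
    (hi : lieIndex k L = 2)
    (hMilenteva : (2 * n + 2 ^ 2 + 2) / (2 + 2) ≤ maxAbelianDim k L) :
    maxAbelianDim k L = magic k L ∧ magic k L = q + 1 ∧
    (∃ P : LieSubalgebra k L, IsLieAbelian P ∧ finrank k P = magic k L) ∧
    LieAlgebra.derivedSeries k L 1 = LieAlgebra.center k L :=
  metabelian_CP_general k L n q hdim hn hmeta ht hi hMilenteva
end

section
/- Let Q_n (n = 2q even) be the filiform Lie algebra with basis x₁,…,x_n and nonzero brackets [x₁, x_i] = x_{i+1} for i = 2,…,n−2, and [x_j, x_{n−j+1}] = (−1)^{j+1} x_n for j = 2,…,q. Then the functional ξ = x_n* is regular with stabilizer L(ξ) = span(x₁, x_n), so i(Q_n) = 2 and c(Q_n) = q + 1; moreover H = span(x_{q+1},…,x_n) is an abelian ideal of dimension q = c(Q_n) − 1. -/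
/-!
With `ξ` the coordinate functional of `x (n - 1)`, the form `ξ ⁅·, ·⁆` pairs `x a` only with
`x (n - 1 - a)` for `1 ≤ a ≤ n - 2`, with coefficient `±1`, so its kernel is spanned by `x 0` and
the central vector `x (n - 1)`. For an arbitrary `ξ` the stabilizer still contains `x (n - 1)`
and a second independent vector: `x (n - 2)` if `ξ (x (n - 1)) = 0`, and otherwise an explicit
vector `x 0 + ∑ cₐ • x a`. Hence `i(Q_n) = 2`. The span of `x q, …, x (n - 1)` is abelian because
two of its indices add up to at least `n`, and it is an ideal because brackets only raise indices.
-/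
open Module

lemma neg_one_pow_eq_neg_of_odd_add {R : Type*} [Ring R] {a b : ℕ} (h : Odd (a + b)) :
    (-1 : R) ^ a = -(-1) ^ b := by
  rcases Nat.even_or_odd a with ha | ha
  · simp [ha.neg_one_pow, ((Nat.odd_add'.mp h).mpr ha).neg_one_pow]
  · simp [ha.neg_one_pow, ((Nat.odd_add.mp h).mp ha).neg_one_pow]

lemma finrank_span_pair_of_dual {k V : Type*} [Field k] [AddCommGroup V] [Module k V] {u v : V}
    (f : Dual k V) (hu : f u ≠ 0) (hv : f v = 0) (hv₀ : v ≠ 0) :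
    finrank k (Submodule.span k {u, v}) = 2 := by
  classical
  have huv : u ≠ v := fun h => hu (h ▸ hv)
  have hli : LinearIndepOn k id {v, u} :=
    linearIndepOn_id_pair hv₀ fun a h => hu (by rw [← h, map_smul, hv, smul_zero])
  rw [Set.pair_comm, finrank_span_set_eq_card hli]
  simp [Finset.card_pair huv.symm]

lemma two_le_finrank_of_dual {k V : Type*} [Field k] [AddCommGroup V] [Module k V]
    [FiniteDimensional k V] {S : Submodule k V} {u v : V} (hu : u ∈ S) (hv : v ∈ S)
    (f : Dual k V) (hfu : f u ≠ 0) (hfv : f v = 0) (hv₀ : v ≠ 0) : 2 ≤ finrank k S :=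
  finrank_span_pair_of_dual f hfu hfv hv₀ ▸
    Submodule.finrank_mono (Submodule.span_le.2 (Set.pair_subset hu hv))

section LieStab

variable {k L : Type*} [Field k] [LieRing L] [LieAlgebra k L]

lemma mem_lieStab_iff_of_basis {ι : Type*} (b : Basis ι k L) (ξ : Dual k L) (w : L) :
    w ∈ lieStab k L ξ ↔ ∀ i, ξ ⁅w, b i⁆ = 0 := by
  refine ⟨fun h i => h (b i), fun h z => ?_⟩
  have : ξ ∘ₗ LieModule.toEnd k L L w = 0 := b.ext fun i => by simpa using h i
  simpa using LinearMap.congr_fun this z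

lemma apply_lie_eq_sum_repr {ι : Type*} [Fintype ι] (b : Basis ι k L) (ξ : Dual k L)
    (y z : L) : ξ ⁅y, z⁆ = ∑ i, b.repr y i * ξ ⁅b i, z⁆ := by
  conv_lhs => rw [← b.sum_repr y, sum_lie, map_sum]
  simp only [smul_lie, map_smul, smul_eq_mul]

lemma lieIndex_eq_of_forall_le {m : ℕ} (ξ₀ : Dual k L) (h₀ : finrank k (lieStab k L ξ₀) = m)
    (h : ∀ ξ, m ≤ finrank k (lieStab k L ξ)) : lieIndex k L = m :=
  le_antisymm (Nat.sInf_le ⟨ξ₀, h₀⟩) (le_csInf ⟨m, ξ₀, h₀⟩ (by rintro _ ⟨ξ, rfl⟩; exact h ξ))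

lemma lie_eq_zero_of_mem_span {s : Set L} (h : ∀ u ∈ s, ∀ v ∈ s, ⁅u, v⁆ = 0) {a c : L}
    (ha : a ∈ Submodule.span k s) (hc : c ∈ Submodule.span k s) : ⁅a, c⁆ = 0 := by
  simpa using LinearMap.BilinMap.apply_apply_mem_of_mem_span ⊥ s s
    (LieModule.toEnd k L L : L →ₗ[k] L →ₗ[k] L) (by simpa using h) a c ha hc

lemma lie_mem_span_of_basis {ι : Type*} (b : Basis ι k L) {s : Set L}
    (h : ∀ i, ∀ v ∈ s, ⁅b i, v⁆ ∈ Submodule.span k s) (y : L) {a : L}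
    (ha : a ∈ Submodule.span k s) : ⁅y, a⁆ ∈ Submodule.span k s := by
  refine LinearMap.BilinMap.apply_apply_mem_of_mem_span _ (Set.range b) s
    (LieModule.toEnd k L L : L →ₗ[k] L →ₗ[k] L) ?_ y a (by simp [b.span_eq]) ha
  rintro _ ⟨i, rfl⟩ v hv
  simpa using h i v hv

end LieStab

/-- The basis `x 0, …, x (n - 1)` of `Q_n` (the paper's `x₁, …, x_n`), extended by zero. -/
structure IsQnBasis (k : Type*) [Field k] {L : Type*} [LieRing L] [LieAlgebra k L]
    (q n : ℕ) (b : Basis (Fin n) k L) (x : ℕ → L) : Prop where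
  two_le : 2 ≤ q
  n_eq : n = 2 * q
  x_eq : ∀ i (h : i < n), x i = b ⟨i, h⟩
  x_eq_zero : ∀ i, n ≤ i → x i = 0
  lie_x_zero_x : ∀ i, 1 ≤ i → i ≤ n - 3 → ⁅x 0, x i⁆ = x (i + 1)
  lie_x_zero_x_sub_two : ⁅x 0, x (n - 2)⁆ = 0
  lie_x_zero_x_last : ⁅x 0, x (n - 1)⁆ = 0
  lie_x_x_sub : ∀ a, 1 ≤ a → a ≤ q - 1 → ⁅x a, x (n - 1 - a)⁆ = ((-1 : k) ^ a) • x (n - 1)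
  lie_x_x_eq_zero : ∀ i j, 1 ≤ i → 1 ≤ j → i + j ≠ n - 1 → ⁅x i, x j⁆ = 0

/-- The coefficients solve `ξ ⁅w, x j⁆ = 0` for `1 ≤ j ≤ n - 3`; the equation for `j = 0` then
holds because its terms cancel in pairs under `a ↦ n - 1 - a`. -/
noncomputable def stabVector {k L : Type*} [Field k] [AddCommGroup L] [Module k L] (n : ℕ)
    (x : ℕ → L) (ξ : Dual k L) : L :=
  x 0 + ∑ a ∈ Finset.Icc 2 (n - 2), (-(-1 : k) ^ a * ξ (x (n - a)) / ξ (x (n - 1))) • x a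

namespace IsQnBasis

variable {k L : Type*} [Field k] [LieRing L] [LieAlgebra k L] {q n : ℕ}
  {b : Basis (Fin n) k L} {x : ℕ → L}

lemma four_le (hQ : IsQnBasis k q n b x) : 4 ≤ n := by
  have := hQ.two_le; have := hQ.n_eq; omega

lemma last_lt (hQ : IsQnBasis k q n b x) : n - 1 < n := by
  have := hQ.four_le; omega

lemma zero_lt (hQ : IsQnBasis k q n b x) : 0 < n := by
  have := hQ.four_le; omega

lemma x_coe (hQ : IsQnBasis k q n b x) (i : Fin n) : x i = b i :=
  hQ.x_eq i i.isLt

lemma coord_x (hQ : IsQnBasis k q n b x) (i : Fin n) {j : ℕ} (hj : j < n) :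
    b.coord i (x j) = if j = i then 1 else 0 := by
  rw [hQ.x_eq j hj, Basis.coord_apply, Basis.repr_self, Finsupp.single_apply]
  simp [Fin.ext_iff, eq_comm]

lemma x_ne_zero (hQ : IsQnBasis k q n b x) {i : ℕ} (hi : i < n) : x i ≠ 0 := by
  rw [hQ.x_eq i hi]; exact b.ne_zero _

lemma lie_x_last (hQ : IsQnBasis k q n b x) (y : L) : ⁅y, x (n - 1)⁆ = 0 := by
  have := hQ.four_le
  rw [← b.sum_repr y, sum_lie]
  refine Finset.sum_eq_zero fun i _ => ?_
  rw [smul_lie, ← hQ.x_coe]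
  rcases Nat.eq_zero_or_pos i with h | h
  · rw [h, hQ.lie_x_zero_x_last, smul_zero]
  · rw [hQ.lie_x_x_eq_zero i (n - 1) h (by omega) (by omega), smul_zero]

lemma x_last_mem_lieStab (hQ : IsQnBasis k q n b x) (ξ : Dual k L) :
    x (n - 1) ∈ lieStab k L ξ := fun y => by
  rw [← lie_skew, hQ.lie_x_last, neg_zero, map_zero]

lemma lie_x_x_of_add_eq (hQ : IsQnBasis k q n b x) {a j : ℕ} (ha : 1 ≤ a) (hj : 1 ≤ j)
    (h : a + j = n - 1) : ⁅x a, x j⁆ = ((-1 : k) ^ a) • x (n - 1) := by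
  have := hQ.n_eq
  rcases le_or_gt a (q - 1) with hle | hgt
  · obtain rfl : j = n - 1 - a := by omega
    exact hQ.lie_x_x_sub a ha hle
  · have hja : ⁅x j, x (n - 1 - j)⁆ = ((-1 : k) ^ j) • x (n - 1) :=
      hQ.lie_x_x_sub j hj (by omega)
    rw [show n - 1 - j = a by omega] at hja
    rw [← lie_skew, hja, ← neg_smul,
      neg_one_pow_eq_neg_of_odd_add (R := k) (a := a) (b := j) ⟨q - 1, by omega⟩]

lemma mem_lieStab_iff (hQ : IsQnBasis k q n b x) (ξ : Dual k L) (w : L) :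
    w ∈ lieStab k L ξ ↔ ∀ j < n, ξ ⁅w, x j⁆ = 0 := by
  rw [mem_lieStab_iff_of_basis b]
  exact ⟨fun h j hj => hQ.x_eq j hj ▸ h _, fun h i => hQ.x_coe i ▸ h i i.isLt⟩

lemma coord_last_lie_x_zero (hQ : IsQnBasis k q n b x) {j : ℕ} (hj : j < n) :
    b.coord ⟨n - 1, hQ.last_lt⟩ ⁅x 0, x j⁆ = 0 := by
  have := hQ.four_le
  rcases Nat.eq_zero_or_pos j with rfl | hj₁
  · rw [lie_self, map_zero]
  rcases Nat.lt_or_ge j (n - 2) with hj₂ | hj₂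
  · rw [hQ.lie_x_zero_x j hj₁ (by omega), hQ.coord_x _ (by omega),
      if_neg (by dsimp only; omega)]
  · obtain rfl | rfl : j = n - 2 ∨ j = n - 1 := by omega
    · rw [hQ.lie_x_zero_x_sub_two, map_zero]
    · rw [hQ.lie_x_zero_x_last, map_zero]

lemma coord_last_lie_x_x (hQ : IsQnBasis k q n b x) {i j : ℕ} (hi : i < n) (hj : j < n) :
    b.coord ⟨n - 1, hQ.last_lt⟩ ⁅x i, x j⁆ =
      if 1 ≤ i ∧ 1 ≤ j ∧ i + j = n - 1 then (-1 : k) ^ i else 0 := by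
  rcases Nat.eq_zero_or_pos i with rfl | hi₁
  · simp [hQ.coord_last_lie_x_zero hj]
  rcases Nat.eq_zero_or_pos j with rfl | hj₁
  · rw [← lie_skew, map_neg, hQ.coord_last_lie_x_zero hi]
    simp
  split_ifs with h
  · rw [hQ.lie_x_x_of_add_eq hi₁ hj₁ h.2.2, map_smul, hQ.coord_x _ hQ.last_lt, if_pos rfl,
      smul_eq_mul, mul_one]
  · rw [hQ.lie_x_x_eq_zero i j hi₁ hj₁ (by omega), map_zero]

lemma lieStab_coord_last (hQ : IsQnBasis k q n b x) :
    lieStab k L (b.coord ⟨n - 1, hQ.last_lt⟩) = Submodule.span k {x 0, x (n - 1)} := by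
  have := hQ.four_le
  apply le_antisymm
  · intro y hy
    have hrepr : ∀ i : Fin n, 1 ≤ (i : ℕ) → (i : ℕ) ≤ n - 2 → b.repr y i = 0 := by
      intro i hi₁ hi₂
      have h := hy (x (n - 1 - i))
      rw [apply_lie_eq_sum_repr b, Finset.sum_eq_single i (fun i' _ hi' => ?_) (by simp),
        ← hQ.x_coe, hQ.coord_last_lie_x_x i.isLt (by omega), if_pos (by omega)] at h
      · exact (mul_eq_zero.mp h).resolve_right (pow_ne_zero _ (neg_ne_zero.mpr one_ne_zero))
      · rw [← hQ.x_coe, hQ.coord_last_lie_x_x i'.isLt (by omega), if_neg, mul_zero]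
        exact fun h' => hi' (Fin.ext (by omega))
    rw [← b.sum_repr y]
    refine Submodule.sum_mem _ fun i _ => ?_
    by_cases hi : (i : ℕ) = 0 ∨ (i : ℕ) = n - 1
    · refine Submodule.smul_mem _ _ (Submodule.subset_span ?_)
      rcases hi with hi | hi <;> simp [← hQ.x_coe, hi]
    · rw [hrepr i (by omega) (by omega), zero_smul]
      exact Submodule.zero_mem _
  · rw [Submodule.span_le]
    exact Set.pair_subset ((hQ.mem_lieStab_iff _ _).2 fun j hj => hQ.coord_last_lie_x_zero hj)
      (hQ.x_last_mem_lieStab _)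

lemma coord_x_last (hQ : IsQnBasis k q n b x) (i : Fin n) (hi : (i : ℕ) ≠ n - 1) :
    b.coord i (x (n - 1)) = 0 := by
  rw [hQ.coord_x i hQ.last_lt, if_neg (Ne.symm hi)]

lemma finrank_lieStab_coord_last (hQ : IsQnBasis k q n b x) :
    finrank k (lieStab k L (b.coord ⟨n - 1, hQ.last_lt⟩)) = 2 := by
  have := hQ.four_le
  rw [hQ.lieStab_coord_last]
  refine finrank_span_pair_of_dual (b.coord ⟨0, hQ.zero_lt⟩) ?_
    (hQ.coord_x_last _ (by dsimp only; omega)) (hQ.x_ne_zero hQ.last_lt)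
  simp [hQ.coord_x _ hQ.zero_lt]

lemma x_sub_two_mem_lieStab (hQ : IsQnBasis k q n b x) {ξ : Dual k L}
    (hξ : ξ (x (n - 1)) = 0) : x (n - 2) ∈ lieStab k L ξ := by
  have := hQ.four_le
  refine (hQ.mem_lieStab_iff _ _).2 fun j hj => ?_
  rcases Nat.eq_zero_or_pos j with rfl | hj₁
  · rw [← lie_skew, hQ.lie_x_zero_x_sub_two, neg_zero, map_zero]
  rcases eq_or_ne j 1 with rfl | hj₂
  · rw [hQ.lie_x_x_of_add_eq (by omega) le_rfl (by omega), map_smul, hξ, smul_zero]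
  · rw [hQ.lie_x_x_eq_zero _ _ (by omega) hj₁ (by omega), map_zero]

lemma coord_zero_stabVector (hQ : IsQnBasis k q n b x) (ξ : Dual k L) :
    b.coord ⟨0, hQ.zero_lt⟩ (stabVector n x ξ) = 1 := by
  rw [stabVector, map_add, map_sum, hQ.coord_x _ hQ.zero_lt, if_pos rfl,
    Finset.sum_eq_zero fun a ha => ?_, add_zero]
  rw [Finset.mem_Icc] at ha
  rw [map_smul, hQ.coord_x _ (by omega), if_neg (by dsimp only; omega), smul_zero]

lemma apply_lie_stabVector_x_zero (hQ : IsQnBasis k q n b x) (ξ : Dual k L) :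
    ξ ⁅stabVector n x ξ, x 0⁆ = 0 := by
  have := hQ.four_le
  have hn := hQ.n_eq
  rw [stabVector, add_lie, lie_self, zero_add, sum_lie, map_sum,
    show n - 2 = n - 3 + 1 by omega, Finset.sum_Icc_succ_top (by omega),
    show n - 3 + 1 = n - 2 by omega, smul_lie, ← lie_skew, hQ.lie_x_zero_x_sub_two, neg_zero,
    smul_zero, map_zero, add_zero]
  refine Finset.sum_involution (fun a _ => n - 1 - a) (fun a ha => ?_)
    (fun a ha _ => by simp only [Finset.mem_Icc] at ha; omega)
    (fun a ha => by simp only [Finset.mem_Icc] at ha ⊢; omega)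
    (fun a ha => by simp only [Finset.mem_Icc] at ha; omega)
  rw [Finset.mem_Icc] at ha
  simp only [smul_lie, map_smul, smul_eq_mul]
  rw [← lie_skew, hQ.lie_x_zero_x a (by omega) (by omega), ← lie_skew (x (n - 1 - a)),
    hQ.lie_x_zero_x (n - 1 - a) (by omega) (by omega), show n - (n - 1 - a) = a + 1 by omega,
    show n - 1 - a + 1 = n - a by omega,
    neg_one_pow_eq_neg_of_odd_add (R := k) (a := n - 1 - a) (b := a) ⟨q - 1, by omega⟩,
    map_neg, map_neg]
  ring

lemma apply_lie_stabVector_x (hQ : IsQnBasis k q n b x) {ξ : Dual k L}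
    (hξ : ξ (x (n - 1)) ≠ 0) {j : ℕ} (hj₁ : 1 ≤ j) (hj₂ : j ≤ n - 3) :
    ξ ⁅stabVector n x ξ, x j⁆ = 0 := by
  have := hQ.four_le
  rw [stabVector, add_lie, sum_lie, map_add, map_sum, hQ.lie_x_zero_x j hj₁ hj₂,
    Finset.sum_eq_single_of_mem (n - 1 - j) (by simp only [Finset.mem_Icc]; omega)
      fun a ha hne => ?_]
  · have hsq : ((-1 : k) ^ (n - 1 - j)) ^ 2 = 1 := by
      rw [← pow_mul, pow_mul', neg_one_sq, one_pow]
    rw [smul_lie, hQ.lie_x_x_of_add_eq (by omega) hj₁ (by omega), map_smul, map_smul,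
      smul_eq_mul, smul_eq_mul, show n - (n - 1 - j) = j + 1 by omega]
    field_simp
    linear_combination (-ξ (x (j + 1))) * hsq
  · rw [Finset.mem_Icc] at ha
    rw [smul_lie, hQ.lie_x_x_eq_zero a j (by omega) hj₁ (by omega), smul_zero, map_zero]

lemma stabVector_mem_lieStab (hQ : IsQnBasis k q n b x) {ξ : Dual k L}
    (hξ : ξ (x (n - 1)) ≠ 0) : stabVector n x ξ ∈ lieStab k L ξ := by
  have := hQ.four_le
  refine (hQ.mem_lieStab_iff _ _).2 fun j hj => ?_
  rcases Nat.eq_zero_or_pos j with rfl | hj₁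
  · exact hQ.apply_lie_stabVector_x_zero ξ
  rcases Nat.lt_or_ge j (n - 2) with hj₂ | hj₂
  · exact hQ.apply_lie_stabVector_x hξ hj₁ (by omega)
  obtain rfl | rfl : j = n - 2 ∨ j = n - 1 := by omega
  · rw [stabVector, add_lie, sum_lie, hQ.lie_x_zero_x_sub_two, zero_add,
      Finset.sum_eq_zero fun a ha => ?_, map_zero]
    rw [Finset.mem_Icc] at ha
    rw [smul_lie, hQ.lie_x_x_eq_zero a (n - 2) (by omega) (by omega) (by omega), smul_zero]
  · rw [hQ.lie_x_last, map_zero]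

lemma two_le_finrank_lieStab (hQ : IsQnBasis k q n b x) (ξ : Dual k L) :
    2 ≤ finrank k (lieStab k L ξ) := by
  have := hQ.four_le
  have : FiniteDimensional k L := .of_basis b
  have hlast := hQ.x_last_mem_lieStab ξ
  have hne := hQ.x_ne_zero hQ.last_lt
  by_cases hξ : ξ (x (n - 1)) = 0
  · refine two_le_finrank_of_dual (hQ.x_sub_two_mem_lieStab hξ) hlast
      (b.coord ⟨n - 2, by omega⟩) ?_ (hQ.coord_x_last _ (by dsimp only; omega)) hne
    simp [hQ.coord_x _ (show n - 2 < n by omega)]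
  · refine two_le_finrank_of_dual (hQ.stabVector_mem_lieStab hξ) hlast
      (b.coord ⟨0, hQ.zero_lt⟩) ?_ (hQ.coord_x_last _ (by dsimp only; omega)) hne
    rw [hQ.coord_zero_stabVector]
    exact one_ne_zero

lemma lieIndex_eq_two (hQ : IsQnBasis k q n b x) : lieIndex k L = 2 :=
  lieIndex_eq_of_forall_le _ hQ.finrank_lieStab_coord_last hQ.two_le_finrank_lieStab

lemma lie_x_x_eq_zero_of_le (hQ : IsQnBasis k q n b x) {l m : ℕ} (hl : q ≤ l) (hm : q ≤ m) :
    ⁅x l, x m⁆ = 0 := by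
  have := hQ.two_le
  have := hQ.n_eq
  exact hQ.lie_x_x_eq_zero l m (by omega) (by omega) (by omega)

lemma lie_basis_x_mem_span (hQ : IsQnBasis k q n b x) (i : Fin n) {l : ℕ} (hl : q ≤ l) :
    ⁅b i, x l⁆ ∈ Submodule.span k {v | ∃ l, q ≤ l ∧ v = x l} := by
  have := hQ.four_le
  have := hQ.n_eq
  have hmem : ∀ m, q ≤ m → x m ∈ Submodule.span k {v | ∃ l, q ≤ l ∧ v = x l} :=
    fun m hm => Submodule.subset_span ⟨m, hm, rfl⟩
  rw [← hQ.x_coe]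
  rcases Nat.eq_zero_or_pos i with hi | hi
  · rw [hi]
    rcases Nat.lt_or_ge l (n - 2) with hl₂ | hl₂
    · rw [hQ.lie_x_zero_x l (by omega) (by omega)]
      exact hmem _ (by omega)
    · rcases Nat.lt_or_ge l n with hl₃ | hl₃
      · obtain rfl | rfl : l = n - 2 ∨ l = n - 1 := by omega
        · rw [hQ.lie_x_zero_x_sub_two]; exact Submodule.zero_mem _
        · rw [hQ.lie_x_zero_x_last]; exact Submodule.zero_mem _
      · rw [hQ.x_eq_zero l hl₃, lie_zero]; exact Submodule.zero_mem _
  · by_cases hsum : (i : ℕ) + l = n - 1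
    · rw [hQ.lie_x_x_of_add_eq hi (by omega) hsum]
      exact Submodule.smul_mem _ _ (hmem _ (by omega))
    · rw [hQ.lie_x_x_eq_zero i l hi (by omega) hsum]; exact Submodule.zero_mem _

lemma finrank_span_x_ge (hQ : IsQnBasis k q n b x) :
    finrank k (Submodule.span k {v | ∃ l, q ≤ l ∧ v = x l}) = q := by
  have := hQ.n_eq
  have hspan : Submodule.span k {v | ∃ l, q ≤ l ∧ v = x l} =
      Submodule.span k (Set.range fun i : Fin q => b ⟨q + i, by omega⟩) := by
    apply le_antisymm <;> rw [Submodule.span_le]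
    · rintro _ ⟨l, hl, rfl⟩
      rcases Nat.lt_or_ge l n with h | h
      · refine Submodule.subset_span ⟨⟨l - q, by omega⟩, ?_⟩
        simp only [hQ.x_eq l h]
        congr 2
        omega
      · rw [hQ.x_eq_zero l h]; exact Submodule.zero_mem _
    · rintro _ ⟨i, rfl⟩
      exact Submodule.subset_span ⟨q + i, by omega, (hQ.x_eq _ _).symm⟩
  rw [hspan, finrank_span_eq_card, Fintype.card_fin]
  exact b.linearIndependent.comp _ fun i j h => Fin.ext (by simpa using congrArg Fin.val h)

end IsQnBasis

/-- for the filiform Lie algebra `Q_n` (`n = 2q`), the functional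
`ξ = x_n*` is regular with stabilizer `span(x₁, x_n)`, so `i(Q_n) = 2` and
`c(Q_n) = q + 1`; moreover `H = span(x_{q+1},…,x_n)` (0-indexed: the `x l` with `l ≥ q`)
is an abelian ideal of dimension `q = c(Q_n) - 1`.  (Indexing is 0-based: `x i` here is
the paper's `x_{i+1}`.) -/
theorem Qn_index_and_abelian_ideal (k : Type*) [Field k]
    (L : Type*) [LieRing L] [LieAlgebra k L]
    (q n : ℕ) (hq2 : 2 ≤ q) (hn : n = 2 * q)
    (b : Basis (Fin n) k L) (x : ℕ → L)
    (hx : ∀ i (h : i < n), x i = b ⟨i, h⟩) (hx0 : ∀ i, n ≤ i → x i = 0)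
    (h1 : ∀ i, 1 ≤ i → i ≤ n - 3 → ⁅x 0, x i⁆ = x (i + 1))
    (h2 : ⁅x 0, x (n - 2)⁆ = 0) (h3 : ⁅x 0, x (n - 1)⁆ = 0)
    (h4 : ∀ a, 1 ≤ a → a ≤ q - 1 → ⁅x a, x (n - 1 - a)⁆ = ((-1 : k) ^ a) • x (n - 1))
    (h5 : ∀ i j, 1 ≤ i → 1 ≤ j → i + j ≠ n - 1 → ⁅x i, x j⁆ = 0)
    (ξ : Module.Dual k L) (hξ : ξ = b.coord ⟨n - 1, by omega⟩)
    (H : Submodule k L) (hH : H = Submodule.span k {v | ∃ l, q ≤ l ∧ v = x l}) :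
    lieStab k L ξ = Submodule.span k {x 0, x (n - 1)} ∧
    lieIndex k L = 2 ∧ magic k L = q + 1 ∧
    (∀ a ∈ H, ∀ c ∈ H, ⁅a, c⁆ = 0) ∧
    (∀ y : L, ∀ a ∈ H, ⁅y, a⁆ ∈ H) ∧
    finrank k H = q ∧ q = magic k L - 1 := by
  have hQ : IsQnBasis k q n b x := ⟨hq2, hn, hx, hx0, h1, h2, h3, h4, h5⟩
  have hmagic : magic k L = q + 1 := by
    rw [magic, finrank_eq_card_basis b, Fintype.card_fin, hQ.lieIndex_eq_two]
    omega
  subst hξ hH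
  refine ⟨hQ.lieStab_coord_last, hQ.lieIndex_eq_two, hmagic, ?_, ?_, hQ.finrank_span_x_ge, by omega⟩
  · exact fun a ha c hc => lie_eq_zero_of_mem_span
      (by rintro _ ⟨l, hl, rfl⟩ _ ⟨m, hm, rfl⟩; exact hQ.lie_x_x_eq_zero_of_le hl hm) ha hc
  · exact fun y a ha => lie_mem_span_of_basis b
      (by rintro i _ ⟨l, hl, rfl⟩; exact hQ.lie_basis_x_mem_span i hl) y ha
end
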